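/- One-period robust maximizer existence: let Ω be a measurable space, 𝔓 a nonempty set of probability measures on Ω, and Ψ : Ω × ℝ^d → ℝ ∪ {-∞} jointly measurable with Ψ(ω, ·) concave and upper-semicontinuous for each ω, Ψ ≤ C uniformly, and inf_{P∈𝔓} E^P[Ψ(h°)] > -∞ for some h° ∈ ℝ^d. If the set K := {h ∈ ℝ^d : Ψ^∞(h) ≥ 0 𝔓-quasi-surely} is a linear subspace, then there exists ĥ ∈ ℝ^d such that inf_{P∈𝔓} E^P[Ψ(ĥ)] = sup_{h∈ℝ^d} inf_{P∈𝔓} E^P[Ψ(h)]. -/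

import Mathlib

/-!
Write `Φ h = ⨅ i, E^{Pᵢ}[Ψ(·, h)]`. Lebesgue integration preserves concavity, and Fatou's lemma
turns upper semicontinuity of each `Ψ ω` into upper semicontinuity of `Φ`; also `Φ ≤ C` and
`Φ h₀ > -∞`. In every superlevel set `{Φ ≥ sup Φ - 1/(n+1)}` pick a point of minimal norm. If these
points stay bounded, the superlevel sets cut out a decreasing sequence of nonempty compact sets,
and a common point is a maximizer. Otherwise, by concavity, a limit `d` of their directions is a
direction along which `Φ` stays bounded below from `h₀`. Fatou's lemma and concavity of each
`Ψ ω` then give `Ψ^∞(d) ≥ 0` quasi-surely, i.e. `d ∈ K`; as `K` is a subspace, `-d ∈ K`, so each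
`Ψ ω`, and hence `Φ`, is nondecreasing along `-d`. But then `h - d` lies in the same superlevel
set as a far-out minimal-norm point `h` and has smaller norm.
-/

open MeasureTheory Filter
open scoped ENNReal

/-- Concavity for extended-real-valued functions (values in `ℝ ∪ {-∞} ⊆ EReal`). -/
def IsConcaveE {E : Type*} [AddCommGroup E] [Module ℝ E] (f : E → EReal) : Prop :=
  ∀ x y : E, ∀ a b : ℝ, 0 ≤ a → 0 ≤ b → a + b = 1 →
    (a : EReal) * f x + (b : EReal) * f y ≤ f (a • x + b • y)

/-- Horizon (recession) function of `f` with base point `x`: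
`f^∞(h) = inf_{n ∈ ℕ+} (1/n) (f (x + n h) - f x)`. -/
noncomputable def hor {E : Type*} [AddCommGroup E] [Module ℝ E]
    (f : E → EReal) (x h : E) : EReal :=
  ⨅ n : ℕ+, ((n : ℝ)⁻¹ : EReal) * (f (x + (n : ℝ) • h) - f x)

/-- The canonical map `EReal → ℝ≥0∞` (sending `⊤` to `⊤` and negatives to `0`). -/
noncomputable def erealToENNReal (x : EReal) : ℝ≥0∞ :=
  if x = ⊤ then ⊤ else ENNReal.ofReal x.toReal

/-- Expectation of a function `g : Ω → ℝ ∪ {-∞}` bounded above by the constant `C`,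
with values in `ℝ ∪ {-∞} ⊆ EReal`: `E[g] = C - ∫⁻ (C - g)`. -/
noncomputable def expE {Ω : Type*} [MeasurableSpace Ω] (P : Measure Ω) (C : ℝ)
    (g : Ω → EReal) : EReal :=
  (C : EReal) - ENNReal.toEReal (∫⁻ ω, erealToENNReal ((C : EReal) - g ω) ∂P)

open Topology Metric

namespace EReal
lemma coe_sub_coe_toENNReal_sub {C : ℝ} {x : EReal} (hx : x ≤ C) :
    (C : EReal) - (((C : EReal) - x).toENNReal : EReal) = x := by
  rw [coe_toENNReal (sub_nonneg (.inl (coe_ne_top C)) (.inl (coe_ne_bot C)) |>.2 hx)]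
  induction x using EReal.rec with
  | bot => simp
  | top => simp at hx
  | coe x => norm_cast; ring

lemma toENNReal_coe_sub_coe_sub (C : ℝ) (t : ℝ≥0∞) :
    ((C : EReal) - ((C : EReal) - t)).toENNReal = t := by
  induction t using ENNReal.recTopCoe with
  | top => simp
  | coe t =>
    rw [coe_nnreal_eq_coe_real, ← coe_sub, ← coe_sub, sub_sub_cancel, real_coe_toENNReal,
      ENNReal.ofReal_coe_nnreal]

lemma coe_mul_coe_sub_add_coe_mul_coe_sub {a b : ℝ} (ha : 0 ≤ a) (hb : 0 ≤ b) (hab : a + b = 1)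
    (C : ℝ) (s t : ℝ≥0∞) :
    (a : EReal) * (C - s) + b * (C - t)
      = C - ((ENNReal.ofReal a * s + ENNReal.ofReal b * t : ℝ≥0∞) : EReal) := by
  rcases ha.eq_or_lt with rfl | ha
  · obtain rfl : b = 1 := by linarith
    simp
  rcases hb.eq_or_lt with rfl | hb
  · obtain rfl : a = 1 := by linarith
    simp
  induction s using ENNReal.recTopCoe with
  | top => simp [coe_mul_bot_of_pos ha, ENNReal.mul_top (ENNReal.ofReal_pos.2 ha).ne']
  | coe s =>
  induction t using ENNReal.recTopCoe with
  | top => simp [coe_mul_bot_of_pos hb, ENNReal.mul_top (ENNReal.ofReal_pos.2 hb).ne']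
  | coe t =>
    rw [coe_nnreal_eq_coe_real, coe_nnreal_eq_coe_real, ← ENNReal.ofReal_coe_nnreal,
      ← ENNReal.ofReal_coe_nnreal (p := t), ← ENNReal.ofReal_mul ha.le,
      ← ENNReal.ofReal_mul hb.le, ← ENNReal.ofReal_add (by positivity) (by positivity),
      coe_ennreal_ofReal, max_eq_left (by positivity)]
    norm_cast
    linear_combination C * hab

lemma toENNReal_coe_sub_mul_add_mul {a b : ℝ} (ha : 0 ≤ a) (hb : 0 ≤ b) (hab : a + b = 1)
    {C : ℝ} {x y : EReal} (hx : x ≤ C) (hy : y ≤ C) :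
    ((C : EReal) - (a * x + b * y)).toENNReal
      = ENNReal.ofReal a * ((C : EReal) - x).toENNReal
        + ENNReal.ofReal b * ((C : EReal) - y).toENNReal := by
  conv_lhs => rw [← coe_sub_coe_toENNReal_sub hx, ← coe_sub_coe_toENNReal_sub hy,
    coe_mul_coe_sub_add_coe_mul_coe_sub ha hb hab, toENNReal_coe_sub_coe_sub]

lemma continuous_coe_sub (C : ℝ) : Continuous fun x : EReal => (C : EReal) - x :=
  continuous_iff_continuousAt.2 fun _ =>
    (continuousAt_add (p := (C, _)) (.inl (coe_ne_top C)) (.inl (coe_ne_bot C))).comp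
      (f := fun x : EReal => ((C : EReal), -x))
      (continuous_const.prodMk continuous_neg).continuousAt

lemma antitone_coe_sub (C : ℝ) : Antitone fun x : EReal => (C : EReal) - x :=
  fun _ _ h => sub_le_sub le_rfl h

lemma antitone_toENNReal_coe_sub (C : ℝ) : Antitone fun x : EReal => ((C : EReal) - x).toENNReal :=
  fun _ _ h => toENNReal_le_toENNReal (antitone_coe_sub C h)

lemma exists_frequently_coe_le_of_liminf_lt_top {α : Type*} {l : Filter α} {C : ℝ}
    {y : α → EReal} (hy : ∀ a, y a ≤ C)
    (h : liminf (fun a => ((C : EReal) - y a).toENNReal) l < ⊤) :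
    ∃ s : ℝ, ∃ᶠ a in l, (s : EReal) ≤ y a := by
  obtain ⟨b, hb, hb_top⟩ := exists_between h
  refine ⟨C - b.toReal, (frequently_lt_of_liminf_lt (by isBoundedDefault) hb).mono fun a ha => ?_⟩
  rw [← coe_sub_coe_toENNReal_sub (hy a), coe_sub, coe_ennreal_toReal hb_top.ne]
  exact antitone_coe_sub C (coe_ennreal_le_coe_ennreal_iff.2 ha.le)

end EReal

lemma LowerSemicontinuous.lintegral {X α : Type*} [TopologicalSpace X] [FirstCountableTopology X]
    [MeasurableSpace α] {μ : Measure α} {F : X → α → ℝ≥0∞} (hF : ∀ x, Measurable (F x))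
    (hlsc : ∀ a, LowerSemicontinuous fun x => F x a) :
    LowerSemicontinuous fun x => ∫⁻ a, F x a ∂μ :=
  lowerSemicontinuous_iff_le_liminf.2 fun x => calc
    ∫⁻ a, F x a ∂μ ≤ ∫⁻ a, liminf (fun y => F y a) (𝓝 x) ∂μ :=
      lintegral_mono fun a => (hlsc a).le_liminf x
    _ ≤ liminf (fun y => ∫⁻ a, F y a ∂μ) (𝓝 x) := lintegral_liminf_le hF

lemma UpperSemicontinuous.le_of_tendsto {X α γ : Type*} [TopologicalSpace X] [LinearOrder γ]
    [DenselyOrdered γ] [TopologicalSpace γ] [OrderTopology γ] {f : X → γ}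
    (hf : UpperSemicontinuous f) {l : Filter α} [l.NeBot] {x : α → X} {z : X}
    (hx : Tendsto x l (𝓝 z)) {c : α → γ} {r : γ} (hc : Tendsto c l (𝓝 r))
    (hle : ∀ᶠ j in l, c j ≤ f (x j)) : r ≤ f z := by
  by_contra! h
  obtain ⟨y, hzy, hyr⟩ := exists_between h
  obtain ⟨j, hfy, hyc, hcf⟩ :=
    ((hx.eventually (hf z y hzy)).and ((hc.eventually (eventually_gt_nhds hyr)).and hle)).exists
  exact (hfy.trans hyc).not_ge hcf

lemma tendsto_coe_one_sub_mul_add_mul {α : Type*} {l : Filter α} {lam : α → ℝ}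
    (hlam : Tendsto lam l (𝓝 0)) (r s : ℝ) :
    Tendsto (fun j => (((1 - lam j) * r + lam j * s : ℝ) : EReal)) l (𝓝 r) :=
  (continuous_coe_real_ereal.tendsto r).comp <| by
    simpa using ((tendsto_const_nhds (x := (1 : ℝ)).sub hlam).mul_const r).add (hlam.mul_const s)

lemma IsClosed.exists_isMinOn_norm {E : Type*} [NormedAddCommGroup E] [ProperSpace E]
    {s : Set E} (hs : IsClosed s) (hne : s.Nonempty) : ∃ x ∈ s, IsMinOn norm s x := by
  obtain ⟨x, hx, hdist⟩ := hs.exists_infDist_eq_dist hne 0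
  refine ⟨x, hx, isMinOn_iff.2 fun y hy => ?_⟩
  have := infDist_le_dist_of_mem (x := (0 : E)) hy
  rwa [hdist, dist_zero_left, dist_zero_left] at this

lemma norm_sub_lt_norm_of_norm_inv_smul_sub_lt {E : Type*} [NormedAddCommGroup E]
    [NormedSpace ℝ E] {x d : E} (hx : 1 ≤ ‖x‖) (hd : ‖‖x‖⁻¹ • x - d‖ < 1) : ‖x - d‖ < ‖x‖ := by
  have hsplit : x - d = (1 - ‖x‖⁻¹) • x + (‖x‖⁻¹ • x - d) := by
    rw [sub_smul, one_smul]; abel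
  calc ‖x - d‖ ≤ (1 - ‖x‖⁻¹) * ‖x‖ + ‖‖x‖⁻¹ • x - d‖ := by
        rw [hsplit]
        refine (norm_add_le _ _).trans_eq ?_
        rw [norm_smul, Real.norm_of_nonneg (sub_nonneg.2 (inv_le_one_of_one_le₀ hx))]
    _ < ‖x‖ := by
        rw [sub_mul, one_mul, inv_mul_cancel₀ (zero_lt_one.trans_le hx).ne']
        linarith

section Concave

variable {E : Type*} [AddCommGroup E] [Module ℝ E] {f : E → EReal}

lemma IsConcaveE.iInf {ι : Type*} {f : ι → E → EReal} (hf : ∀ i, IsConcaveE (f i)) :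
    IsConcaveE fun x => ⨅ i, f i x := fun x y a b ha hb hab =>
  le_iInf fun i =>
    (add_le_add (mul_le_mul_of_nonneg_left (iInf_le _ i) (EReal.coe_nonneg.2 ha))
      (mul_le_mul_of_nonneg_left (iInf_le _ i) (EReal.coe_nonneg.2 hb))).trans
      (hf i x y a b ha hb hab)

lemma IsConcaveE.coe_le_apply_add (hf : IsConcaveE f) {x y : E} {a b r s : ℝ} (ha : 0 ≤ a)
    (hb : 0 ≤ b) (hab : a + b = 1) (hr : (r : EReal) ≤ f x) (hs : (s : EReal) ≤ f y) :
    ((a * r + b * s : ℝ) : EReal) ≤ f (a • x + b • y) := by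
  refine le_trans ?_ (hf x y a b ha hb hab)
  rw [EReal.coe_add, EReal.coe_mul, EReal.coe_mul]
  exact add_le_add (mul_le_mul_of_nonneg_left hr (EReal.coe_nonneg.2 ha))
    (mul_le_mul_of_nonneg_left hs (EReal.coe_nonneg.2 hb))

lemma IsConcaveE.le_add_smul_of_frequently (hf : IsConcaveE f) {x d : E} {s : ℝ}
    (hs : ∃ᶠ n : ℕ in atTop, (s : EReal) ≤ f (x + (n : ℝ) • d)) {t : ℝ} (ht : 0 ≤ t) :
    f x ≤ f (x + t • d) := by
  refine EReal.ge_of_forall_gt_iff_ge.1 fun r hr => ?_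
  obtain ⟨φ, hφ, hφs⟩ := extraction_of_frequently_atTop hs
  have hφ_top : Tendsto (fun j => (φ j : ℝ)) atTop atTop :=
    tendsto_natCast_atTop_atTop.comp hφ.tendsto_atTop
  refine le_of_tendsto (tendsto_coe_one_sub_mul_add_mul (hφ_top.const_div_atTop t) r s) ?_
  filter_upwards [hφ_top.eventually_ge_atTop (max t 1)] with j hj
  have hφ_pos : (0 : ℝ) < φ j := zero_lt_one.trans_le ((le_max_right _ _).trans hj)
  have hlam : t / φ j ≤ 1 := (div_le_one hφ_pos).2 ((le_max_left _ _).trans hj)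
  -- `x + t • d = (1 - t / φ j) • x + (t / φ j) • (x + φ j • d)`
  convert hf.coe_le_apply_add (sub_nonneg.2 hlam) (div_nonneg ht hφ_pos.le) (by ring) hr.le
    (hφs j) using 2
  rw [smul_add, smul_smul, div_mul_cancel₀ t hφ_pos.ne', ← add_assoc, ← add_smul, sub_add_cancel,
    one_smul]

lemma hor_nonneg_iff {x d : E} (hx : f x ≠ ⊥) (hx' : f x ≠ ⊤) :
    0 ≤ hor f x d ↔ ∀ n : ℕ, f x ≤ f (x + (n : ℝ) • d) := by
  have key : ∀ n : ℕ+, 0 ≤ ((n : ℝ)⁻¹ : EReal) * (f (x + (n : ℝ) • d) - f x) ↔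
      f x ≤ f (x + (n : ℝ) • d) := fun n => by
    have hpos : (0 : EReal) < ((n : ℝ)⁻¹ : ℝ) := by
      exact_mod_cast inv_pos.2 (Nat.cast_pos.2 n.pos)
    rw [EReal.mul_nonneg_iff, EReal.sub_nonneg (.inr hx') (.inr hx)]
    refine ⟨?_, fun h => .inl ⟨hpos.le, h⟩⟩
    rintro (⟨-, h⟩ | ⟨h, -⟩)
    exacts [h, absurd h (not_le.2 hpos)]
  simp only [hor, le_iInf_iff, key]
  refine ⟨fun h n => ?_, fun h n => h n⟩
  rcases n.eq_zero_or_pos with rfl | hn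
  · simp
  · exact h ⟨n, hn⟩

end Concave

section ConcaveNormed

variable {E : Type*} [NormedAddCommGroup E] [NormedSpace ℝ E] {f : E → EReal}

lemma IsConcaveE.coe_le_of_tendsto (hf : IsConcaveE f) (husc : UpperSemicontinuous f)
    {x z : E} {y : ℕ → E} {lam : ℕ → ℝ} (hlam_nonneg : ∀ j, 0 ≤ lam j)
    (hlam : Tendsto lam atTop (𝓝 0))
    (hz : Tendsto (fun j => (1 - lam j) • x + lam j • y j) atTop (𝓝 z)) {r s : ℝ}
    (hr : (r : EReal) ≤ f x) (hs : ∀ j, (s : EReal) ≤ f (y j)) : (r : EReal) ≤ f z := by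
  refine husc.le_of_tendsto hz (tendsto_coe_one_sub_mul_add_mul hlam r s) ?_
  filter_upwards [hlam.eventually (eventually_le_nhds zero_lt_one)] with j hj
  exact hf.coe_le_apply_add (sub_nonneg.2 hj) (hlam_nonneg j) (by ring) hr (hs j)

lemma IsConcaveE.le_add_smul_of_forall_nat (hf : IsConcaveE f) (husc : UpperSemicontinuous f)
    {x₀ d : E} {s : ℝ} (hs : ∀ n : ℕ, (s : EReal) ≤ f (x₀ + (n : ℝ) • d)) (x : E) {t : ℝ}
    (ht : 0 ≤ t) : f x ≤ f (x + t • d) := by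
  refine EReal.ge_of_forall_gt_iff_ge.1 fun r hr => ?_
  set lam : ℕ → ℝ := fun j => t / ((j + 1 : ℕ) : ℝ)
  have hlam : Tendsto lam atTop (𝓝 0) :=
    (tendsto_natCast_atTop_atTop.comp (tendsto_add_atTop_nat 1)).const_div_atTop t
  refine hf.coe_le_of_tendsto husc (fun j => by positivity) hlam ?_ hr.le fun j => hs (j + 1)
  have heq : ∀ j : ℕ, x + t • d + lam j • (x₀ - x)
      = (1 - lam j) • x + lam j • (x₀ + ((j + 1 : ℕ) : ℝ) • d) := fun j => by
    rw [smul_add, smul_smul, div_mul_cancel₀ t (by positivity), sub_smul, one_smul, smul_sub]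
    abel
  have hlim := tendsto_const_nhds (x := x + t • d) |>.add (hlam.smul_const (x₀ - x))
  rw [zero_smul, add_zero] at hlim
  exact hlim.congr heq

lemma IsConcaveE.le_add_of_hor_nonneg (hf : IsConcaveE f) (husc : UpperSemicontinuous f)
    {x₀ d : E} (hx₀ : f x₀ ≠ ⊥) (hx₀' : f x₀ ≠ ⊤) (hd : 0 ≤ hor f x₀ d) (x : E) :
    f x ≤ f (x + d) := by
  have hs : ∀ n : ℕ, ((f x₀).toReal : EReal) ≤ f (x₀ + (n : ℝ) • d) := by
    rw [EReal.coe_toReal hx₀' hx₀]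
    exact (hor_nonneg_iff hx₀ hx₀').1 hd
  simpa using hf.le_add_smul_of_forall_nat husc hs x zero_le_one

lemma IsConcaveE.coe_le_add_smul_of_tendsto_direction (hf : IsConcaveE f)
    (husc : UpperSemicontinuous f) {x₀ d : E} {r s : ℝ} (hr : (r : EReal) ≤ f x₀) {x : ℕ → E}
    (hs : ∀ j, (s : EReal) ≤ f (x j)) (hnorm : Tendsto (fun j => ‖x j‖) atTop atTop)
    (hdir : Tendsto (fun j => ‖x j‖⁻¹ • x j) atTop (𝓝 d)) {t : ℝ} (ht : 0 ≤ t) :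
    (r : EReal) ≤ f (x₀ + t • d) := by
  have hlam : Tendsto (fun j => t * ‖x j‖⁻¹) atTop (𝓝 0) := by
    simpa using hnorm.inv_tendsto_atTop.const_mul t
  refine hf.coe_le_of_tendsto husc (fun j => by positivity) hlam ?_ hr hs
  have hlim := (tendsto_const_nhds (x := x₀)).sub (hlam.smul_const x₀) |>.add (hdir.const_smul t)
  rw [zero_smul, sub_zero] at hlim
  exact hlim.congr fun j => by simp only [sub_smul, one_smul, mul_smul]

lemma IsConcaveE.exists_norm_le_of_superlevel_nonempty [ProperSpace E] (hf : IsConcaveE f)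
    (husc : UpperSemicontinuous f) {x₀ : E} {r : ℝ} (hr : (r : EReal) ≤ f x₀)
    (hrec : ∀ d : E, (∀ n : ℕ, (r : EReal) ≤ f (x₀ + (n : ℝ) • d)) → ∀ x, f x ≤ f (x - d))
    {c : ℕ → ℝ} (hc : Monotone c) (hne : ∀ n, ∃ x, (c n : EReal) ≤ f x) :
    ∃ R, ∀ n, ∃ x, ‖x‖ ≤ R ∧ (c n : EReal) ≤ f x := by
  by_contra! hfar
  choose x hxc hxmin using fun n =>
    (husc.isClosed_preimage (c n : EReal)).exists_isMinOn_norm (hne n)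
  have hnorm : Tendsto (fun n => ‖x n‖) atTop atTop := tendsto_atTop.2 fun R => by
    obtain ⟨N, hN⟩ := hfar R
    filter_upwards [eventually_ge_atTop N] with n hn
    by_contra! hR
    exact (hN _ hR.le).not_ge ((EReal.coe_le_coe_iff.2 (hc hn)).trans (hxc n))
  obtain ⟨d, -, σ, hσ, hd⟩ := (isCompact_closedBall (0 : E) 1).tendsto_subseq
    (x := fun n => ‖x n‖⁻¹ • x n) fun n => by
      rw [mem_closedBall_zero_iff, norm_smul, norm_inv, norm_norm]
      exact inv_mul_le_one_of_le₀ le_rfl (norm_nonneg _)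
  have hnormσ := hnorm.comp hσ.tendsto_atTop
  have hray : ∀ n : ℕ, (r : EReal) ≤ f (x₀ + (n : ℝ) • d) := fun n =>
    hf.coe_le_add_smul_of_tendsto_direction husc hr
      (fun j => (EReal.coe_le_coe_iff.2 (hc (Nat.zero_le _))).trans (hxc (σ j))) hnormσ hd
      n.cast_nonneg
  obtain ⟨j, hj₁, hj₂⟩ :=
    ((hnormσ.eventually_ge_atTop 1).and (hd.eventually (ball_mem_nhds d one_pos))).exists
  exact (norm_sub_lt_norm_of_norm_inv_smul_sub_lt hj₁ (mem_ball_iff_norm.1 hj₂)).not_ge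
    (isMinOn_iff.1 (hxmin (σ j)) _ ((hxc (σ j)).trans (hrec d hray _)))

theorem IsConcaveE.exists_forall_le [ProperSpace E] (hf : IsConcaveE f)
    (husc : UpperSemicontinuous f) {C : ℝ} (hC : ∀ x, f x ≤ C) {x₀ : E} (hx₀ : f x₀ ≠ ⊥)
    (hrec : ∀ (d : E) (r : ℝ), (∀ n : ℕ, (r : EReal) ≤ f (x₀ + (n : ℝ) • d)) →
      ∀ x, f x ≤ f (x - d)) :
    ∃ z, ∀ x, f x ≤ f z := by
  have hx₀' : f x₀ ≠ ⊤ := ne_top_of_le_ne_top (EReal.coe_ne_top C) (hC x₀)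
  obtain ⟨μ, hμ⟩ : ∃ μ : ℝ, ⨆ x, f x = μ :=
    ⟨_, (EReal.coe_toReal (ne_top_of_le_ne_top (EReal.coe_ne_top C) (iSup_le hC))
      (ne_bot_of_le_ne_bot hx₀ (le_iSup f x₀))).symm⟩
  set c : ℕ → ℝ := fun n => μ - 1 / (n + 1)
  have hc : Monotone c := fun m n h => by
    simp only [c]
    gcongr
  have hc_lim : Tendsto c atTop (𝓝 μ) := by
    simpa only [sub_zero] using
      (tendsto_const_nhds (x := μ)).sub tendsto_one_div_add_atTop_nhds_zero_nat
  have hne : ∀ n, ∃ x, (c n : EReal) ≤ f x := fun n =>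
    (lt_iSup_iff.1 (hμ ▸ EReal.coe_lt_coe_iff.2 (sub_lt_self μ Nat.one_div_pos_of_nat))).imp
      fun _ => le_of_lt
  obtain ⟨R, hR⟩ := hf.exists_norm_le_of_superlevel_nonempty husc
    (EReal.coe_toReal hx₀' hx₀).le (fun d => hrec d _) hc hne
  set K : ℕ → Set E := fun n => closedBall 0 R ∩ f ⁻¹' Set.Ici (c n)
  obtain ⟨z, hz⟩ := IsCompact.nonempty_iInter_of_sequence_nonempty_isCompact_isClosed K
    (fun n => Set.inter_subset_inter_right _ fun x hx =>
      (EReal.coe_le_coe_iff.2 (hc n.le_succ)).trans hx)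
    (fun n => (hR n).imp fun x hx => ⟨mem_closedBall_zero_iff.2 hx.1, hx.2⟩)
    ((isCompact_closedBall 0 R).inter_right (husc.isClosed_preimage _))
    (fun n => isClosed_closedBall.inter (husc.isClosed_preimage _))
  refine ⟨z, fun x => (le_iSup f x).trans (hμ ▸ ?_)⟩
  exact husc.le_of_tendsto tendsto_const_nhds ((continuous_coe_real_ereal.tendsto μ).comp hc_lim)
    (Eventually.of_forall fun n => (Set.mem_iInter.1 hz n).2)

end ConcaveNormed

section Expectation

variable {E Ω : Type*} [MeasurableSpace Ω] {P : Measure Ω} {C : ℝ} {g g₁ g₂ : Ω → EReal}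
  {Ψ : Ω → E → EReal}

lemma erealToENNReal_eq_toENNReal : erealToENNReal = EReal.toENNReal := rfl

lemma measurable_erealToENNReal_coe_sub (hg : Measurable g) :
    Measurable fun ω => erealToENNReal ((C : EReal) - g ω) :=
  ((EReal.continuous_coe_sub C).measurable.comp hg).ereal_toENNReal

lemma expE_le_coe : expE P C g ≤ C :=
  (EReal.antitone_coe_sub C (EReal.coe_ennreal_nonneg _)).trans_eq (sub_zero _)

lemma expE_mono_ae (h : ∀ᵐ ω ∂P, g₁ ω ≤ g₂ ω) : expE P C g₁ ≤ expE P C g₂ :=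
  EReal.antitone_coe_sub C (EReal.coe_ennreal_le_coe_ennreal_iff.2
    (lintegral_mono_ae (h.mono fun _ hω => EReal.antitone_toENNReal_coe_sub C hω)))

lemma lintegral_le_of_coe_le_expE {r : ℝ} (hr : (r : EReal) ≤ expE P C g) :
    ∫⁻ ω, erealToENNReal ((C : EReal) - g ω) ∂P ≤ ENNReal.ofReal (C - r) := by
  rw [← EReal.toENNReal_coe_sub_coe_sub C (∫⁻ ω, _ ∂P), ← EReal.real_coe_toENNReal, EReal.coe_sub]
  exact EReal.antitone_toENNReal_coe_sub C hr

lemma ae_ne_bot_of_coe_le_expE (hg : Measurable g) {r : ℝ} (hr : (r : EReal) ≤ expE P C g) :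
    ∀ᵐ ω ∂P, g ω ≠ ⊥ := by
  filter_upwards [ae_lt_top (measurable_erealToENNReal_coe_sub hg)
    ((lintegral_le_of_coe_le_expE hr).trans_lt ENNReal.ofReal_lt_top).ne] with ω hω hbot
  simp [hbot, erealToENNReal_eq_toENNReal] at hω

lemma isConcaveE_expE [AddCommGroup E] [Module ℝ E] (hmeas : ∀ x, Measurable fun ω => Ψ ω x)
    (hconc : ∀ ω, IsConcaveE (Ψ ω)) (hbd : ∀ ω x, Ψ ω x ≤ C) :
    IsConcaveE fun x => expE P C fun ω => Ψ ω x := by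
  intro x y a b ha hb hab
  have hU := fun z => measurable_erealToENNReal_coe_sub (C := C) (hmeas z)
  simp only [expE]
  rw [EReal.coe_mul_coe_sub_add_coe_mul_coe_sub ha hb hab, ← lintegral_const_mul _ (hU x),
    ← lintegral_const_mul _ (hU y), ← lintegral_add_left ((hU x).const_mul _)]
  refine EReal.antitone_coe_sub C
    (EReal.coe_ennreal_le_coe_ennreal_iff.2 (lintegral_mono fun ω => ?_))
  rw [erealToENNReal_eq_toENNReal,
    ← EReal.toENNReal_coe_sub_mul_add_mul ha hb hab (hbd ω x) (hbd ω y)]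
  exact EReal.antitone_toENNReal_coe_sub C (hconc ω x y a b ha hb hab)

lemma upperSemicontinuous_expE [TopologicalSpace E] [FirstCountableTopology E]
    (hmeas : ∀ x, Measurable fun ω => Ψ ω x) (husc : ∀ ω, UpperSemicontinuous (Ψ ω)) :
    UpperSemicontinuous fun x => expE P C fun ω => Ψ ω x := by
  have hlsc : LowerSemicontinuous fun x => ∫⁻ ω, erealToENNReal ((C : EReal) - Ψ ω x) ∂P :=
    .lintegral (fun x => measurable_erealToENNReal_coe_sub (hmeas x)) fun ω =>
      Continuous.comp_upperSemicontinuous_antitone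
        (EReal.continuous_toENNReal.comp (EReal.continuous_coe_sub C)) (husc ω)
        (EReal.antitone_toENNReal_coe_sub C)
  exact Continuous.comp_lowerSemicontinuous_antitone (g := fun t : ℝ≥0∞ => (C : EReal) - t)
    ((EReal.continuous_coe_sub C).comp continuous_coe_ennreal_ereal) hlsc
    fun _ _ h => EReal.antitone_coe_sub C (EReal.coe_ennreal_le_coe_ennreal_iff.2 h)

lemma ae_hor_nonneg_of_coe_le_expE [AddCommGroup E] [Module ℝ E]
    (hmeas : ∀ x, Measurable fun ω => Ψ ω x) (hconc : ∀ ω, IsConcaveE (Ψ ω))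
    (hbd : ∀ ω x, Ψ ω x ≤ C) {x₀ d : E} {r : ℝ}
    (hr : ∀ n : ℕ, (r : EReal) ≤ expE P C fun ω => Ψ ω (x₀ + (n : ℝ) • d)) :
    ∀ᵐ ω ∂P, 0 ≤ hor (Ψ ω) x₀ d := by
  set U : ℕ → Ω → ℝ≥0∞ := fun n ω => erealToENNReal ((C : EReal) - Ψ ω (x₀ + (n : ℝ) • d))
  have hU : ∀ n, Measurable (U n) := fun n => measurable_erealToENNReal_coe_sub (hmeas _)
  have hfin : ∀ᵐ ω ∂P, liminf (fun n => U n ω) atTop < ⊤ := by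
    refine ae_lt_top (Measurable.liminf hU) (ne_of_lt ?_)
    calc _ ≤ liminf (fun n => ∫⁻ ω, U n ω ∂P) atTop := lintegral_liminf_le hU
      _ ≤ ENNReal.ofReal (C - r) := liminf_le_of_frequently_le'
          (Frequently.of_forall fun n => lintegral_le_of_coe_le_expE (hr n))
      _ < ⊤ := ENNReal.ofReal_lt_top
  have hbot : ∀ᵐ ω ∂P, Ψ ω x₀ ≠ ⊥ := ae_ne_bot_of_coe_le_expE (hmeas x₀) (by simpa using hr 0)
  filter_upwards [hfin, hbot] with ω hω hω₀
  obtain ⟨s, hs⟩ := EReal.exists_frequently_coe_le_of_liminf_lt_top (fun n => hbd ω _) hω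
  rw [hor_nonneg_iff hω₀ (ne_top_of_le_ne_top (EReal.coe_ne_top C) (hbd ω x₀))]
  exact fun n => (hconc ω).le_add_smul_of_frequently hs n.cast_nonneg

end Expectation

theorem stmt10_general {Ω : Type*} [MeasurableSpace Ω] {ι : Type*} [Nonempty ι]
    (P : ι → Measure Ω)
    {d : ℕ} (Ψ : Ω → (Fin d → ℝ) → EReal) (C : ℝ)
    (hmeas : Measurable (Function.uncurry Ψ))
    (hconc : ∀ ω, IsConcaveE (Ψ ω))
    (husc : ∀ ω, UpperSemicontinuous (Ψ ω))
    (hbd : ∀ ω z, Ψ ω z ≤ (C : EReal))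
    (h₀ : Fin d → ℝ) (hh₀ : (⨅ i, expE (P i) C (fun ω => Ψ ω h₀)) ≠ ⊥)
    (hNA : ∃ S : Submodule ℝ (Fin d → ℝ),
      (S : Set (Fin d → ℝ)) = {h | ∀ i, ∀ᵐ ω ∂(P i), 0 ≤ hor (Ψ ω) h₀ h}) :
    ∃ hhat : Fin d → ℝ,
      (⨅ i, expE (P i) C (fun ω => Ψ ω hhat))
        = ⨆ h : Fin d → ℝ, ⨅ i, expE (P i) C (fun ω => Ψ ω h) := by
  have hsec : ∀ h, Measurable fun ω => Ψ ω h := fun h => hmeas.comp measurable_prodMk_right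
  set Φ : (Fin d → ℝ) → EReal := fun h => ⨅ i, expE (P i) C fun ω => Ψ ω h
  obtain ⟨S, hS⟩ := hNA
  have hΨ₀ : ∀ i, ∀ᵐ ω ∂(P i), Ψ ω h₀ ≠ ⊥ := fun i => by
    obtain ⟨r, -, hr⟩ := EReal.exists_between_coe_real (bot_lt_iff_ne_bot.2 hh₀)
    exact ae_ne_bot_of_coe_le_expE (hsec h₀) (hr.le.trans (iInf_le _ i))
  have hrec : ∀ (k : Fin d → ℝ) (r : ℝ), (∀ n : ℕ, (r : EReal) ≤ Φ (h₀ + (n : ℝ) • k)) →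
      ∀ h, Φ h ≤ Φ (h - k) := fun k r hr h => by
    have hk : k ∈ S := by
      rw [← SetLike.mem_coe, hS]
      exact fun i => ae_hor_nonneg_of_coe_le_expE hsec hconc hbd fun n =>
        (hr n).trans (iInf_le _ i)
    have hnk := S.neg_mem hk
    rw [← SetLike.mem_coe, hS] at hnk
    refine iInf_mono fun i => expE_mono_ae ?_
    filter_upwards [hnk i, hΨ₀ i] with ω hω hω₀
    simpa [sub_eq_add_neg] using (hconc ω).le_add_of_hor_nonneg (husc ω) hω₀
      (ne_top_of_le_ne_top (EReal.coe_ne_top C) (hbd ω h₀)) hω h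
  obtain ⟨hhat, hmax⟩ :=
    (IsConcaveE.iInf fun i => isConcaveE_expE hsec hconc hbd).exists_forall_le
      (upperSemicontinuous_iInf fun i => upperSemicontinuous_expE hsec husc)
      (fun h => (iInf_le _ (Classical.arbitrary ι)).trans expE_le_coe) hh₀ hrec
  exact ⟨hhat, le_antisymm (le_iSup Φ hhat) (iSup_le hmax)⟩

/-- one-period robust maximizer existence. If
`K := {h | Ψ^∞(h) ≥ 0 𝔓-q.s.}` is a linear subspace, then
`sup_h inf_i E^{Pᵢ}[Ψ(h)]` is attained by some `ĥ ∈ ℝ^d`. -/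
theorem stmt10 {Ω : Type*} [MeasurableSpace Ω] {ι : Type*} [Nonempty ι]
    (P : ι → Measure Ω) [∀ i, IsProbabilityMeasure (P i)]
    {d : ℕ} (Ψ : Ω → (Fin d → ℝ) → EReal) (C : ℝ)
    (hmeas : Measurable (Function.uncurry Ψ))
    (hconc : ∀ ω, IsConcaveE (Ψ ω))
    (husc : ∀ ω, UpperSemicontinuous (Ψ ω))
    (hbd : ∀ ω z, Ψ ω z ≤ (C : EReal))
    (h₀ : Fin d → ℝ) (hh₀ : (⨅ i, expE (P i) C (fun ω => Ψ ω h₀)) ≠ ⊥)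
    (hNA : ∃ S : Submodule ℝ (Fin d → ℝ),
      (S : Set (Fin d → ℝ)) = {h | ∀ i, ∀ᵐ ω ∂(P i), 0 ≤ hor (Ψ ω) h₀ h}) :
    ∃ hhat : Fin d → ℝ,
      (⨅ i, expE (P i) C (fun ω => Ψ ω hhat))
        = ⨆ h : Fin d → ℝ, ⨅ i, expE (P i) C (fun ω => Ψ ω h) :=
  stmt10_general P Ψ C hmeas hconc husc hbd h₀ hh₀ hNA
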